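/- Let G be a group and F ⊆ G' two families of subgroups of G. Let ℓ¹₀(G/F) be the normed ℝG-module of summable functions f : G/F → ℝ (finite ℓ¹-norm Σ_{x∈G/F} |f(x)|) whose total sum Σ_{x∈G/F} f(x) is zero, with action (g·f)(x) = f(g⁻¹·x). Define the cocycle K_F : (G/F)² → ℓ¹₀(G/F) by K_F(x,y) = χ_y − χ_x, where χ_x is the characteristic function of the point x. Suppose there exist a bounded G-equivariant function c : (G/G')² → ℓ¹₀(G/F) with δ¹c = 0 and a bounded G-equivariant function b : G/F → ℓ¹₀(G/F) such that the restriction of c to (G/F)² equals K_F + δ⁰b. Then every subgroup H ∈ G' is finite relative to the family F|_H = {L ∩ H : L ∈ F}, i.e. F|_H contains a subgroup of finite index in H. -/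

import Mathlib

open scoped BigOperators

universe u v w

namespace RelBdd

variable {G : Type u} [Group G]

/-- `F` is a family of subgroups of `G`: nonempty, closed under conjugation and
closed under taking subgroups. -/
def IsFamily (F : Set (Subgroup G)) : Prop :=
  F.Nonempty ∧
    (∀ H ∈ F, ∀ g : G, Subgroup.map ((MulAut.conj g).toMonoidHom) H ∈ F) ∧
    ∀ H ∈ F, ∀ K : Subgroup G, K ≤ H → K ∈ F

/-- The `G`-set `G/F = ⨿_{H ∈ F} G/H`. -/
abbrev Cos (G : Type u) [Group G] (F : Set (Subgroup G)) : Type u :=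
  Σ H : F, G ⧸ (H : Subgroup G)

instance (F : Set (Subgroup G)) : SMul G (Cos G F) :=
  ⟨fun g x => ⟨x.1, g • x.2⟩⟩

instance (F : Set (Subgroup G)) : MulAction G (Cos G F) where
  one_smul := by
    rintro ⟨H, q⟩
    show (⟨H, (1 : G) • q⟩ : Cos G F) = ⟨H, q⟩
    rw [one_smul]
  mul_smul g h := by
    rintro ⟨H, q⟩
    show (⟨H, (g * h) • q⟩ : Cos G F) = ⟨H, g • h • q⟩
    rw [mul_smul]

/-- A function into a normed space is bounded. -/
def Bdd {α : Type*} {V : Type*} [Norm V] (f : α → V) : Prop :=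
  ∃ C : ℝ, ∀ x, ‖f x‖ ≤ C

/-- The simplicial coboundary operator on `V`-valued cochains on a set `S`. -/
def delta {S : Type*} {V : Type*} [AddCommGroup V] [Module ℝ V] (n : ℕ)
    (f : (Fin (n + 1) → S) → V) : (Fin (n + 2) → S) → V :=
  fun x => ∑ i : Fin (n + 2), ((-1 : ℝ) ^ (i : ℕ)) • f (fun j => x (i.succAbove j))

/-- `ℓ∞(S)`: the space of bounded real valued functions on `S`. -/
def Linf (S : Type v) : Submodule ℝ (S → ℝ) where
  carrier := {f | ∃ C : ℝ, ∀ s, |f s| ≤ C}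
  add_mem' := by
    rintro f g ⟨C, hC⟩ ⟨D, hD⟩
    exact ⟨C + D, fun s => (abs_add_le _ _).trans (add_le_add (hC s) (hD s))⟩
  zero_mem' := ⟨0, fun s => by simp⟩
  smul_mem' := by
    rintro r f ⟨C, hC⟩
    refine ⟨|r| * C, fun s => ?_⟩
    show |r * f s| ≤ |r| * C
    rw [abs_mul]
    exact mul_le_mul_of_nonneg_left (hC s) (abs_nonneg r)

/-- The constant function `r` as an element of `ℓ∞(S)`. -/
def constLinf (S : Type v) (r : ℝ) : Linf S :=
  ⟨fun _ => r, ⟨|r|, fun _ => le_rfl⟩⟩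

/-- Precomposition with a map `φ : S → S` as a linear endomorphism of `ℓ∞(S)`. -/
def compL {S : Type v} (φ : S → S) : Linf S →ₗ[ℝ] Linf S where
  toFun f := ⟨fun s => (f : S → ℝ) (φ s), by
    obtain ⟨C, hC⟩ := f.2
    exact ⟨C, fun s => hC (φ s)⟩⟩
  map_add' f g := by ext s; rfl
  map_smul' r f := by ext s; rfl

/-- There exists a `K`-invariant mean on the `K`-set `S`. -/
def InvariantMean (K : Type u) (S : Type v) [Group K] [MulAction K S] : Prop :=
  ∃ m : Linf S →ₗ[ℝ] ℝ,
    m (constLinf S 1) = 1 ∧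
    (∀ f : Linf S, (∀ s, 0 ≤ (f : S → ℝ) s) → 0 ≤ m f) ∧
    ∀ (g : K) (f : Linf S), m (compL (fun s => g⁻¹ • s) f) = m f

/-- The restriction `F|_H = {L ∩ H : L ∈ F}` of a collection of subgroups of `G` to
a collection of subgroups of `H`. -/
def restrictedFamily (F : Set (Subgroup G)) (H : Subgroup G) : Set (Subgroup H) :=
  {K | ∃ L ∈ F, K = L.subgroupOf H}

/-- `K` is amenable relative to the collection `𝒦` of its subgroups: the `K`-set
`⨿_{L ∈ 𝒦} K/L` admits a `K`-invariant mean. -/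
def RelativelyAmenable (K : Type u) [Group K] (𝒦 : Set (Subgroup K)) : Prop :=
  InvariantMean K (Cos K 𝒦)

/-- The family generated by a set `ℋ` of subgroups: all subgroups of conjugates of
members of `ℋ`, together with the trivial subgroup. -/
def famGen (ℋ : Set (Subgroup G)) : Set (Subgroup G) :=
  {K | K = ⊥ ∨ ∃ H ∈ ℋ, ∃ g : G, ∀ x ∈ K, g⁻¹ * x * g ∈ H}

/-- The left multiplication action of `g ∈ G` on a normed `ℝG`-module `W`, as a
continuous linear map. -/
def smulCLM {W : Type w} [NormedAddCommGroup W] [NormedSpace ℝ W] [DistribMulAction G W]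
    [SMulCommClass G ℝ W] (hW : ∀ (g : G) (w : W), ‖g • w‖ = ‖w‖) (g : G) : W →L[ℝ] W :=
  LinearMap.mkContinuous
    { toFun := fun w => g • w
      map_add' := fun a b => smul_add g a b
      map_smul' := fun r w => smul_comm g r w }
    1 (fun w => by simp [hW])

section Statement19

/-- `ℓ¹₀(S)`: the submodule of `ℓ¹(S)` of summable real valued functions on `S`
whose total sum is zero. -/
noncomputable def l1zero (S : Type v) : Submodule ℝ (lp (fun _ : S => ℝ) 1) where
  carrier := {f | HasSum (⇑f) 0}
  zero_mem' := by
    show HasSum (⇑(0 : lp (fun _ : S => ℝ) 1)) 0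
    rw [lp.coeFn_zero]; exact hasSum_zero
  add_mem' := by
    intro f g hf hg
    show HasSum (⇑(f + g)) 0
    rw [lp.coeFn_add]; have h := hf.add hg; rw [add_zero] at h; exact h
  smul_mem' := by
    intro r f hf
    show HasSum (⇑(r • f)) 0
    rw [lp.coeFn_smul]; have h := hf.const_smul r; rw [smul_zero] at h; exact h

/-- The characteristic function of a point, as an element of `ℓ¹₀`'s ambient `ℓ¹`. -/
noncomputable def chiFun (S : Type v) (s : S) : lp (fun _ : S => ℝ) 1 :=
  letI := Classical.decEq S
  lp.single 1 s (1 : ℝ)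

lemma chiFun_hasSum (S : Type v) (s : S) : HasSum (⇑(chiFun S s)) 1 := by
  classical
  have h : ⇑(chiFun S s) = fun j => if j = s then (1 : ℝ) else 0 := by
    funext j
    by_cases h : j = s
    · subst h
      simp [chiFun, lp.single_apply_self]
    · simp [chiFun, lp.single_apply_ne _ _ _ h, h]
  rw [h]
  exact hasSum_ite_eq s 1

/-- The cocycle `K_F(x₀,x₁) = χ_{x₁} - χ_{x₀}` with values in `ℓ¹₀(S)`. -/
noncomputable def kfCocycle (S : Type v) (x : Fin 2 → S) : l1zero S :=
  ⟨chiFun S (x 1) - chiFun S (x 0), by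
    show HasSum (⇑(chiFun S (x 1) - chiFun S (x 0))) 0
    rw [lp.coeFn_sub]
    have h := (chiFun_hasSum S (x 1)).sub (chiFun_hasSum S (x 0)); rw [sub_self] at h; exact h⟩

variable {G : Type u} [Group G]

/-- The `G`-action `(g • f) s = f (g⁻¹ • s)` on `ℓ¹(S)` for a `G`-set `S`. -/
noncomputable def shiftLp {S : Type v} [MulAction G S] (g : G)
    (f : lp (fun _ : S => ℝ) 1) : lp (fun _ : S => ℝ) 1 :=
  ⟨fun s => f (g⁻¹ • s), by
    apply memℓp_gen
    exact (Equiv.summable_iff (MulAction.toPerm g⁻¹ : Equiv.Perm S)).mpr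
      ((lp.memℓp f).summable (by norm_num))⟩

/-- The `G`-action `(g • f) s = f (g⁻¹ • s)` on `ℓ¹₀(S)` for a `G`-set `S`. -/
noncomputable def shiftL10 {S : Type v} [MulAction G S] (g : G)
    (f : l1zero S) : l1zero S :=
  ⟨shiftLp g f.1, (Equiv.hasSum_iff (MulAction.toPerm (g⁻¹ : G) : Equiv.Perm S)).mpr f.2⟩

/-- The inclusion of `G`-sets `G/F ⊆ G/G'` for families `F ⊆ G'`. -/
def inclCos {F F' : Set (Subgroup G)} (h : F ⊆ F') :
    Cos G F → Cos G F' :=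
  fun x => ⟨⟨(x.1 : Subgroup G), h x.1.2⟩, x.2⟩

/-!
Fix `H ∈ G'` and let `p` be the coset `H ∈ G/H ⊆ G/G'`, a point fixed by `H`. For
`x ∈ G/F` put `ν(x) = χ_x + b(x) - c(p, x) ∈ ℓ¹(G/F)`. The cocycle identity
`c(x, y) = c(p, y) - c(p, x)` together with `c(x, y) = χ_y - χ_x + b(y) - b(x)` shows that
`ν(x)` does not depend on `x`, and equivariance gives `ν(h x) = h · ν(x)` for `h ∈ H`. So `ν`
is an `H`-invariant summable function of total sum `1`. It is nonzero at some point `gL`,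
whose `H`-orbit is then finite since `ν` is constant on it; hence the stabiliser
`gLg⁻¹ ∩ H` has finite index in `H`.
-/

lemma delta_one_apply {S V : Type*} [AddCommGroup V] [Module ℝ V]
    (f : (Fin 2 → S) → V) (x y z : S) :
    delta 1 f ![x, y, z] = f ![y, z] - f ![x, z] + f ![x, y] := by
  have h₁ : (fun j => ![x, y, z] (Fin.succAbove 1 j)) = ![x, z] := by
    ext j; fin_cases j <;> rfl
  have h₂ : (fun j => ![x, y, z] (Fin.succAbove 2 j)) = ![x, y] := by
    ext j; fin_cases j <;> rfl
  simp [delta, Fin.sum_univ_succ, h₁, h₂, sub_eq_add_neg, add_assoc]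

lemma delta_zero_apply {S V : Type*} [AddCommGroup V] [Module ℝ V]
    (f : (Fin 1 → S) → V) (x y : S) :
    delta 0 f ![x, y] = f (fun _ => y) - f (fun _ => x) := by
  have h₁ : (fun j => ![x, y] (Fin.succAbove 1 j)) = fun _ => x := by
    ext j; fin_cases j; rfl
  simp [delta, Fin.sum_univ_succ, h₁, sub_eq_add_neg]

lemma chiFun_apply {S : Type v} [DecidableEq S] (s t : S) :
    chiFun S s t = if t = s then 1 else 0 := by
  simp [chiFun, Pi.single_apply]

lemma coe_kfCocycle {S : Type v} (x y : S) :
    (kfCocycle S ![x, y] : lp (fun _ : S => ℝ) 1) = chiFun S y - chiFun S x :=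
  rfl

section Shift

variable {S : Type v} [MulAction G S]

@[simp]
lemma shiftLp_apply (g : G) (f : lp (fun _ : S => ℝ) 1) (s : S) :
    shiftLp g f s = f (g⁻¹ • s) :=
  rfl

lemma shiftLp_add (g : G) (f₁ f₂ : lp (fun _ : S => ℝ) 1) :
    shiftLp g (f₁ + f₂) = shiftLp g f₁ + shiftLp g f₂ := by
  ext s; simp

lemma shiftLp_sub (g : G) (f₁ f₂ : lp (fun _ : S => ℝ) 1) :
    shiftLp g (f₁ - f₂) = shiftLp g f₁ - shiftLp g f₂ := by
  ext s; simp

lemma shiftLp_chiFun (g : G) (x : S) : shiftLp g (chiFun S x) = chiFun S (g • x) := by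
  classical
  ext s
  simp [chiFun_apply, inv_smul_eq_iff]

end Shift

section TransferVector

variable {S : Type v} {T : Type*}

noncomputable def transferVector (c : (Fin 2 → T) → l1zero S) (b : (Fin 1 → S) → l1zero S)
    (ι : S → T) (p : T) (x : S) : lp (fun _ : S => ℝ) 1 :=
  chiFun S x + b (fun _ => x) - c ![p, ι x]

variable {c : (Fin 2 → T) → l1zero S} {b : (Fin 1 → S) → l1zero S} {ι : S → T}

lemma transferVector_hasSum (p : T) (x : S) : HasSum (⇑(transferVector c b ι p x)) 1 := by
  have h := ((chiFun_hasSum S x).add (b fun _ => x).2).sub (c ![p, ι x]).2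
  rw [add_zero, sub_zero] at h
  exact h

lemma transferVector_eq_of_cocycle (hcocycle : delta 1 c = 0)
    (hrestr : ∀ x : Fin 2 → S, c (fun j => ι (x j)) = kfCocycle S x + delta 0 b x)
    (p : T) (x y : S) : transferVector c b ι p y = transferVector c b ι p x := by
  have hc : c ![ι x, ι y] = c ![p, ι y] - c ![p, ι x] := by
    have hxy := congrFun hcocycle ![p, ι x, ι y]
    rw [delta_one_apply, Pi.zero_apply] at hxy
    rw [← sub_eq_zero, ← hxy]
    abel
  have hrestr_xy : c ![ι x, ι y] = kfCocycle S ![x, y] + (b (fun _ => y) - b (fun _ => x)) := by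
    rw [← delta_zero_apply, ← hrestr]
    congr 1; ext j; fin_cases j <;> rfl
  have key := congrArg Subtype.val (hc.symm.trans hrestr_xy)
  push_cast [coe_kfCocycle] at key
  rw [transferVector, transferVector, ← sub_eq_zero]
  calc _ = chiFun S y - chiFun S x + ((b (fun _ => y) : lp (fun _ : S => ℝ) 1) - b (fun _ => x))
        - ((c ![p, ι y] : lp (fun _ : S => ℝ) 1) - c ![p, ι x]) := by abel
    _ = 0 := by rw [key, sub_self]

variable [MulAction G S] [MulAction G T]

lemma transferVector_smul
    (hcequiv : ∀ (g : G) (x : Fin 2 → T), c (fun j => g • x j) = shiftL10 g (c x))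
    (hbequiv : ∀ (g : G) (x : Fin 1 → S), b (fun j => g • x j) = shiftL10 g (b x))
    {g : G} {p : T} (hp : g • p = p) (hι : ∀ x, ι (g • x) = g • ι x) (x : S) :
    transferVector c b ι p (g • x) = shiftLp g (transferVector c b ι p x) := by
  have hc : c ![p, ι (g • x)] = shiftL10 g (c ![p, ι x]) := by
    rw [← hcequiv]
    congr 1; ext j; fin_cases j
    exacts [hp.symm, hι x]
  rw [transferVector, transferVector, shiftLp_sub, shiftLp_add, shiftLp_chiFun, hc,
    hbequiv g fun _ => x]
  rfl

end TransferVector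

lemma finite_orbit_of_summable_of_invariant {K S E : Type*} [Group K] [MulAction K S]
    [AddCommGroup E] [TopologicalSpace E] [IsTopologicalAddGroup E] [T1Space E] {f : S → E}
    (hf : Summable f) (hinv : ∀ (k : K) (s : S), f (k • s) = f s) {s : S} (hs : f s ≠ 0) :
    (MulAction.orbit K s).Finite := by
  have hlevel : {t | f t = f s}.Finite := by
    simpa using Filter.eventually_cofinite.mp (hf.tendsto_cofinite_zero.eventually_ne hs.symm)
  exact hlevel.subset (by rintro _ ⟨k, rfl⟩; exact hinv k s)

lemma finite_orbit_of_shiftLp_eq {S : Type v} [MulAction G S] (H : Subgroup G)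
    {v : lp (fun _ : S => ℝ) 1} (hv : ∀ h ∈ H, shiftLp h v = v) {s : S} (hs : v s ≠ 0) :
    (MulAction.orbit H s).Finite := by
  refine finite_orbit_of_summable_of_invariant (lp.memℓp v).summable_of_one (fun h t => ?_) hs
  simpa [Subgroup.smul_def] using congrArg (· t) (hv _ (inv_mem h.2))

lemma stabilizer_cos_mk {F : Set (Subgroup G)} (H : Subgroup G) {L : Subgroup G} (hL : L ∈ F)
    (g : G) : MulAction.stabilizer H (⟨⟨L, hL⟩, QuotientGroup.mk g⟩ : Cos G F)
      = (Subgroup.map (MulAut.conj g).toMonoidHom L).subgroupOf H := by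
  ext h
  rw [Subgroup.mem_subgroupOf, Subgroup.mem_map_equiv, MulAut.conj_symm_apply,
    MulAction.mem_stabilizer_iff]
  change (⟨⟨L, hL⟩, QuotientGroup.mk ((h : G) * g)⟩ : Cos G F) = _ ↔ _
  rw [Sigma.ext_iff]
  simp only [heq_eq_eq, true_and, QuotientGroup.eq]
  rw [show ((h : G) * g)⁻¹ * g = (g⁻¹ * h * g)⁻¹ by group, inv_mem_iff]

lemma exists_finiteIndex_subgroupOf_of_finite_orbit {F : Set (Subgroup G)}
    (hF : ∀ L ∈ F, ∀ g : G, Subgroup.map (MulAut.conj g).toMonoidHom L ∈ F) (H : Subgroup G)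
    {x : Cos G F} (hx : (MulAction.orbit H x).Finite) :
    ∃ L ∈ F, (L.subgroupOf H).FiniteIndex := by
  obtain ⟨⟨L, hL⟩, q⟩ := x
  obtain ⟨g, rfl⟩ := QuotientGroup.mk_surjective q
  refine ⟨_, hF L hL g, ?_⟩
  rw [← stabilizer_cos_mk H hL, Subgroup.finiteIndex_iff_finite_quotient]
  exact (MulAction.orbitEquivQuotientStabilizer H _).finite_iff.mp hx.to_subtype

theorem kf_class_implies_relatively_finite_general
    (F F' : Set (Subgroup G)) (hF : IsFamily F) (hFF' : F ⊆ F')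
    (c : (Fin 2 → Cos G F') → l1zero (Cos G F))
    (hcequiv : ∀ (g : G) (x : Fin 2 → Cos G F'),
      c (fun j => g • x j) = shiftL10 g (c x))
    (hccocycle : delta 1 c = 0)
    (b : (Fin 1 → Cos G F) → l1zero (Cos G F))
    (hbequiv : ∀ (g : G) (x : Fin 1 → Cos G F),
      b (fun j => g • x j) = shiftL10 g (b x))
    (hrestr : ∀ x : Fin 2 → Cos G F,
      c (fun j => inclCos hFF' (x j)) = kfCocycle (Cos G F) x + delta 0 b x) :
    ∀ H : Subgroup G, H ∈ F' → ∃ L ∈ F, (L.subgroupOf H).FiniteIndex := by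
  intro H hH
  obtain ⟨L₀, hL₀⟩ := hF.1
  let p : Cos G F' := ⟨⟨H, hH⟩, QuotientGroup.mk 1⟩
  have hp : ∀ h ∈ H, h • p = p := fun h hh =>
    Sigma.ext rfl (heq_of_eq (QuotientGroup.eq.mpr (by simpa using inv_mem hh)))
  let ν := transferVector c b (inclCos hFF') p ⟨⟨L₀, hL₀⟩, QuotientGroup.mk 1⟩
  have hν : ∀ h ∈ H, shiftLp h ν = ν := fun h hh =>
    (transferVector_smul hcequiv hbequiv (hp h hh) (fun _ => rfl) _).symm.trans
      (transferVector_eq_of_cocycle hccocycle hrestr _ _ _)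
  obtain ⟨s, hs⟩ : ∃ s, ν s ≠ 0 := by
    by_contra! hzero
    have hsum : HasSum (⇑ν) 1 := transferVector_hasSum _ _
    rw [funext hzero] at hsum
    exact one_ne_zero (hsum.unique hasSum_zero)
  exact exists_finiteIndex_subgroupOf_of_finite_orbit hF.2.1 H (finite_orbit_of_shiftLp_eq H hν hs)

/-- Theorem 4.10, (iv) ⇒ (i).  Let `F ⊆ G'` be families of
subgroups of `G`.  If the class `[K_F] ∈ H¹_{F,b}(G; ℓ¹₀(G/F))` lies in the image of
the canonical map `H¹_{G',b}(G; ℓ¹₀(G/F)) → H¹_{F,b}(G; ℓ¹₀(G/F))` — i.e. there are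
a bounded `G`-equivariant cocycle `c` on `(G/G')²` and a bounded `G`-equivariant `b`
on `G/F` with `c|_{(G/F)²} = K_F + δ⁰b` — then every `H ∈ G'` is finite relative to
`F|_H`, i.e. `F|_H` contains a finite index subgroup of `H`. -/
theorem kf_class_implies_relatively_finite
    (F F' : Set (Subgroup G)) (hF : IsFamily F) (hF' : IsFamily F') (hFF' : F ⊆ F')
    (c : (Fin 2 → Cos G F') → l1zero (Cos G F))
    (hcbdd : Bdd c)
    (hcequiv : ∀ (g : G) (x : Fin 2 → Cos G F'),
      c (fun j => g • x j) = shiftL10 g (c x))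
    (hccocycle : delta 1 c = 0)
    (b : (Fin 1 → Cos G F) → l1zero (Cos G F))
    (hbbdd : Bdd b)
    (hbequiv : ∀ (g : G) (x : Fin 1 → Cos G F),
      b (fun j => g • x j) = shiftL10 g (b x))
    (hrestr : ∀ x : Fin 2 → Cos G F,
      c (fun j => inclCos hFF' (x j)) = kfCocycle (Cos G F) x + delta 0 b x) :
    ∀ H : Subgroup G, H ∈ F' → ∃ L ∈ F, (L.subgroupOf H).FiniteIndex :=
  kf_class_implies_relatively_finite_general F F' hF hFF' c hcequiv hccocycle b hbequiv hrestr

end Statement19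


end RelBdd
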